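/- arXiv:1710.10038 — 2 statements merged into one kernel-verified Lean document; each statement's English description precedes it below -/
import Mathlib

section
/- Let S, T ⊆ M be subalgebras of a finite-dimensional von Neumann algebra with T ∩ S ⊇ some subalgebra R = S ∩ T. If the inequality H(S)_ρ + H(T)_ρ − H(M)_ρ − H(S∩T)_ρ ≥ 0 holds for all densities ρ ∈ M, then E_S ∘ E_T = E_T ∘ E_S = E_{S∩T}, i.e. S and T form a commuting square. -/
open Matrix
open scoped ComplexOrder

variable {ι : Type*} [Fintype ι] [DecidableEq ι]

/-- Functional calculus on Hermitian matrices. -/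
noncomputable def matFun (f : ℝ → ℝ) (ρ : Matrix ι ι ℂ) : Matrix ι ι ℂ :=
  if h : ρ.IsHermitian then
    (h.eigenvectorUnitary : Matrix ι ι ℂ) *
      Matrix.diagonal (fun i => (f (h.eigenvalues i) : ℂ)) *
      star (h.eigenvectorUnitary : Matrix ι ι ℂ)
  else 0

/-- Matrix logarithm (on the support: `Real.log 0 = 0`). -/
noncomputable def matLog (ρ : Matrix ι ι ℂ) : Matrix ι ι ℂ := matFun Real.log ρ

/-- von Neumann entropy. -/
noncomputable def vnEntropy (ρ : Matrix ι ι ℂ) : ℝ :=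
  -(Matrix.trace (ρ * matLog ρ)).re

/-- Quantum relative entropy. -/
noncomputable def relEntropy (ρ σ : Matrix ι ι ℂ) : ℝ :=
  (Matrix.trace (ρ * matLog ρ - ρ * matLog σ)).re

/-- A density matrix. -/
def IsDensity (ρ : Matrix ι ι ℂ) : Prop := ρ.PosSemidef ∧ Matrix.trace ρ = 1

/-- `E` is the trace-preserving conditional expectation onto the subalgebra `N`. -/
def IsCondExp (N : StarSubalgebra ℂ (Matrix ι ι ℂ))
    (E : Matrix ι ι ℂ →ₗ[ℂ] Matrix ι ι ℂ) : Prop :=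
  (∀ a, E a ∈ N) ∧ (∀ b ∈ N, E b = b) ∧
  (∀ a, ∀ b ∈ N, Matrix.trace (a * b) = Matrix.trace (E a * b))

/-!
For Hermitian traceless `x`, the state `ρ_ε = (1 + ε x) / N` near the maximally mixed state has
entropy `log N - ε² tr(x²) / (2N) + O(ε³)`: its eigenvalues `λ` satisfy `∑ λ = 1` and
`∑ (N λ - 1)² = ε² tr(x²)`, and `(1 + u) log(1 + u) = u + u²/2 + O(u³)`. Conditional expectations
map `ρ_ε` to the state of the same form built from `E x`, so the `ε²` coefficient of the entropy
inequality reads `tr((E_S x)²) + tr((E_T x)²) ≤ tr(x²) + tr((E_{S∩T} x)²)`. For Hermitian `a`,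
`x = E_T a - E_{S∩T} a` is fixed by `E_T` and killed by `E_{S∩T}`, so this forces `E_S x = 0`,
that is `E_S E_T a = E_{S∩T} a`; Hermitian matrices span all matrices over `ℂ`.
-/

open ComplexStarModule Filter Topology Asymptotics

lemma abs_one_add_mul_log_one_add_sub_le {u : ℝ} (hu : |u| ≤ 1 / 2) :
    |(1 + u) * Real.log (1 + u) - u - u ^ 2 / 2| ≤ 4 * |u| ^ 3 := by
  have hu₀ := abs_nonneg u
  have hr : |Real.log (1 + u) - u + u ^ 2 / 2| ≤ 2 * |u| ^ 3 := by
    have h := Real.abs_log_sub_add_sum_range_le (x := -u) (by rw [abs_neg]; linarith) 2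
    norm_num [Finset.sum_range_succ] at h
    calc |Real.log (1 + u) - u + u ^ 2 / 2| = |-u + u ^ 2 / 2 + Real.log (1 + u)| := by
          congr 1; ring
      _ ≤ |u| ^ 3 / (1 - |u|) := h
      _ ≤ 2 * |u| ^ 3 := by
        rw [div_le_iff₀ (by linarith)]
        nlinarith [pow_nonneg hu₀ 3]
  have h1u : |1 + u| ≤ 3 / 2 := (abs_add_le 1 u).trans (by norm_num; linarith)
  calc |(1 + u) * Real.log (1 + u) - u - u ^ 2 / 2|
      = |(1 + u) * (Real.log (1 + u) - u + u ^ 2 / 2) - u ^ 3 / 2| := by congr 1; ring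
    _ ≤ |1 + u| * |Real.log (1 + u) - u + u ^ 2 / 2| + |u| ^ 3 / 2 := by
        rw [← abs_mul]
        refine (abs_sub _ _).trans (le_of_eq ?_)
        rw [abs_div, abs_pow, abs_two]
    _ ≤ 3 / 2 * (2 * |u| ^ 3) + |u| ^ 3 / 2 := by gcongr
    _ ≤ 4 * |u| ^ 3 := by linarith [pow_nonneg hu₀ 3]

lemma abs_neg_sum_mul_log_sub_le {κ : Type*} [Fintype κ] [Nonempty κ] (p : κ → ℝ)
    (hp : ∑ i, p i = 1) (hbd : ∀ i, |Fintype.card κ * p i - 1| ≤ 1 / 2) :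
    |-∑ i, p i * Real.log (p i) - (Real.log (Fintype.card κ) -
        (∑ i, (Fintype.card κ * p i - 1) ^ 2) / (2 * Fintype.card κ))| ≤
      4 / Fintype.card κ * ∑ i, |Fintype.card κ * p i - 1| ^ 3 := by
  set N : ℝ := (Fintype.card κ : ℝ)
  have hN : 0 < N := Nat.cast_pos.mpr Fintype.card_pos
  set u := fun i => N * p i - 1
  set φ := fun t : ℝ => (1 + t) * Real.log (1 + t) - t - t ^ 2 / 2
  have hu : ∑ i, u i = 0 := by
    simp only [u, Finset.sum_sub_distrib, ← Finset.mul_sum, hp, Finset.sum_const,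
      Finset.card_univ, nsmul_eq_mul, N, mul_one, sub_self]
  have hterm : ∀ i, -(p i * Real.log (p i)) - (p i * Real.log N - u i ^ 2 / (2 * N)) =
      -φ (u i) / N - u i / N := by
    intro i
    have hpos : 0 < 1 + u i := by linarith [(abs_le.mp (hbd i)).1]
    have hp_eq : p i = (1 + u i) / N := by field_simp; ring
    rw [hp_eq, Real.log_div hpos.ne' hN.ne']
    field_simp
    ring
  have hsum : -∑ i, p i * Real.log (p i) - (Real.log N - (∑ i, u i ^ 2) / (2 * N)) =
      -(∑ i, φ (u i)) / N := by
    calc -∑ i, p i * Real.log (p i) - (Real.log N - (∑ i, u i ^ 2) / (2 * N))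
        = ∑ i, (-(p i * Real.log (p i)) - (p i * Real.log N - u i ^ 2 / (2 * N))) := by
          simp only [Finset.sum_sub_distrib, Finset.sum_neg_distrib, ← Finset.sum_mul, hp,
            one_mul, Finset.sum_div]
      _ = -(∑ i, φ (u i)) / N := by
          simp only [hterm, Finset.sum_sub_distrib, ← Finset.sum_div, hu, Finset.sum_neg_distrib]
          ring
  rw [hsum]
  calc |-(∑ i, φ (u i)) / N| = |∑ i, φ (u i)| / N := by rw [abs_div, abs_neg, abs_of_pos hN]
    _ ≤ (∑ i, 4 * |u i| ^ 3) / N := by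
        gcongr
        exact (Finset.abs_sum_le_sum_abs _ _).trans
          (Finset.sum_le_sum fun i _ => abs_one_add_mul_log_one_add_sub_le (hbd i))
    _ = 4 / N * ∑ i, |u i| ^ 3 := by rw [← Finset.mul_sum]; ring

lemma eventually_nonneg_and_mul_le (c : ℝ) {δ : ℝ} (hδ : 0 < δ) :
    ∀ᶠ ε in 𝓝[>] (0 : ℝ), 0 ≤ ε ∧ ε * c ≤ δ := by
  have hlim : Tendsto (fun ε : ℝ => ε * c) (𝓝 0) (𝓝 0) := by
    simpa using (continuous_mul_const c).tendsto 0
  filter_upwards [self_mem_nhdsWithin, nhdsWithin_le_nhds (hlim.eventually_lt_const hδ)]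
    with ε hε hεc
  exact ⟨le_of_lt hε, hεc.le⟩

lemma nonneg_of_eventually_nonneg_mul_sq_add {a : ℝ} {g : ℝ → ℝ}
    (hg : g =O[𝓝[>] 0] fun ε => ε ^ 3) (h : ∀ᶠ ε in 𝓝[>] 0, 0 ≤ a * ε ^ 2 + g ε) : 0 ≤ a := by
  have hlim : Tendsto (fun ε => a + g ε / ε ^ 2) (𝓝[>] 0) (𝓝 a) := by
    have := (hg.trans_isLittleO ((isLittleO_pow_pow (𝕜 := ℝ) (by norm_num : 2 < 3)).mono
      nhdsWithin_le_nhds)).tendsto_div_nhds_zero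
    simpa using this.const_add a
  refine ge_of_tendsto hlim ?_
  filter_upwards [h, self_mem_nhdsWithin] with ε hε hpos
  rw [← mul_div_cancel_right₀ a (pow_ne_zero 2 (ne_of_gt hpos)), ← add_div]
  exact div_nonneg hε (sq_nonneg ε)

lemma Matrix.IsHermitian.trace_mul_matFun {ρ : Matrix ι ι ℂ} (hρ : ρ.IsHermitian) (f : ℝ → ℝ) :
    trace (ρ * matFun f ρ) = ∑ i, (hρ.eigenvalues i : ℂ) * f (hρ.eigenvalues i) := by
  rw [matFun, dif_pos hρ]
  set U : Matrix ι ι ℂ := ↑hρ.eigenvectorUnitary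
  have hU : star U * U = 1 := Matrix.mem_unitaryGroup_iff'.mp hρ.eigenvectorUnitary.2
  have hρU : ρ * U = U * diagonal (RCLike.ofReal ∘ hρ.eigenvalues) := by
    conv_lhs => rw [hρ.spectral_theorem, Unitary.conjStarAlgAut_apply]
    rw [mul_assoc, hU, mul_one]
  rw [← mul_assoc, ← mul_assoc, hρU, trace_mul_comm]
  simp only [← mul_assoc]
  rw [hU, one_mul, diagonal_mul_diagonal, trace_diagonal]
  rfl

lemma Matrix.IsHermitian.vnEntropy_eq {ρ : Matrix ι ι ℂ} (hρ : ρ.IsHermitian) :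
    vnEntropy ρ = -∑ i, hρ.eigenvalues i * Real.log (hρ.eigenvalues i) := by
  rw [vnEntropy, matLog, hρ.trace_mul_matFun]
  norm_cast

lemma Matrix.IsHermitian.trace_mul_self {ρ : Matrix ι ι ℂ} (hρ : ρ.IsHermitian) :
    trace (ρ * ρ) = ∑ i, (hρ.eigenvalues i : ℂ) ^ 2 := by
  have hid : matFun id ρ = ρ := by rw [matFun, dif_pos hρ]; exact hρ.spectral_theorem.symm
  simpa [hid, sq] using hρ.trace_mul_matFun id

lemma Matrix.IsHermitian.eq_zero_of_re_trace_mul_self_nonpos {n : Type*} [Fintype n]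
    {y : Matrix n n ℂ} (hy : y.IsHermitian) (h : (trace (y * y)).re ≤ 0) : y = 0 := by
  have h0 := (posSemidef_conjTranspose_mul_self y).trace_nonneg
  rw [hy.eq] at h0
  obtain ⟨hre, him⟩ := Complex.nonneg_iff.mp h0
  refine trace_conjTranspose_mul_self_eq_zero_iff.mp ?_
  rw [hy.eq]
  exact Complex.ext (le_antisymm h hre) him.symm

lemma StarSubalgebra.eq_of_forall_trace_mul_eq {N : StarSubalgebra ℂ (Matrix ι ι ℂ)}
    {x y : Matrix ι ι ℂ} (hx : x ∈ N) (hy : y ∈ N)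
    (h : ∀ b ∈ N, trace (x * b) = trace (y * b)) : x = y := by
  rw [← sub_eq_zero, ← trace_mul_conjTranspose_self_eq_zero_iff, sub_mul, trace_sub,
    ← star_eq_conjTranspose, h _ (star_mem (sub_mem hx hy)), sub_self]

namespace IsCondExp

variable {N : StarSubalgebra ℂ (Matrix ι ι ℂ)} {E : Matrix ι ι ℂ →ₗ[ℂ] Matrix ι ι ℂ}

lemma map_one (hE : IsCondExp N E) : E 1 = 1 :=
  hE.2.1 1 (one_mem N)

lemma trace_apply (hE : IsCondExp N E) (a : Matrix ι ι ℂ) : trace (E a) = trace a := by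
  simpa using (hE.2.2 a 1 (one_mem N)).symm

lemma map_star (hE : IsCondExp N E) (a : Matrix ι ι ℂ) : E (star a) = star (E a) := by
  refine N.eq_of_forall_trace_mul_eq (hE.1 _) (star_mem (hE.1 a)) fun b hb => ?_
  have trace_star_mul : ∀ c : Matrix ι ι ℂ, trace (star c * b) = star (trace (star b * c)) := by
    intro c
    rw [← trace_conjTranspose, star_eq_conjTranspose, star_eq_conjTranspose, conjTranspose_mul,
      conjTranspose_conjTranspose]
  rw [← hE.2.2 _ b hb, trace_star_mul, trace_star_mul, trace_mul_comm, trace_mul_comm _ (E a),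
    hE.2.2 a _ (star_mem hb)]

lemma isHermitian_apply (hE : IsCondExp N E) {a : Matrix ι ι ℂ} (ha : a.IsHermitian) :
    (E a).IsHermitian := by
  rw [IsHermitian, ← star_eq_conjTranspose, ← hE.map_star, star_eq_conjTranspose, ha.eq]

lemma apply_apply_of_le {N' : StarSubalgebra ℂ (Matrix ι ι ℂ)}
    {E' : Matrix ι ι ℂ →ₗ[ℂ] Matrix ι ι ℂ} (hE : IsCondExp N E) (hE' : IsCondExp N' E')
    (hle : N' ≤ N) (a : Matrix ι ι ℂ) : E' (E a) = E' a :=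
  N'.eq_of_forall_trace_mul_eq (hE'.1 _) (hE'.1 a) fun b hb => by
    rw [← hE'.2.2 _ b hb, ← hE.2.2 a b (hle hb), hE'.2.2 a b hb]

end IsCondExp

lemma Matrix.linearMap_ext_of_isHermitian {n : Type*} {M : Type*} [AddCommGroup M] [Module ℂ M]
    {F G : Matrix n n ℂ →ₗ[ℂ] M} (h : ∀ x : Matrix n n ℂ, x.IsHermitian → F x = G x) :
    F = G := by
  ext1 a
  rw [← realPart_add_I_smul_imaginaryPart a, map_add, map_add, map_smul, map_smul,
    h _ (isHermitian_iff_isSelfAdjoint.mpr (ℜ a).2),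
    h _ (isHermitian_iff_isSelfAdjoint.mpr (ℑ a).2)]

lemma IsCondExp.comp_eq_of_re_trace_mul_self_add_le
    {S T : StarSubalgebra ℂ (Matrix ι ι ℂ)} {ES ET ER : Matrix ι ι ℂ →ₗ[ℂ] Matrix ι ι ℂ}
    (hES : IsCondExp S ES) (hET : IsCondExp T ET) (hER : IsCondExp (S ⊓ T) ER)
    (hquad : ∀ x : Matrix ι ι ℂ, x.IsHermitian → trace x = 0 →
      (trace (ES x * ES x)).re + (trace (ET x * ET x)).re ≤
        (trace (x * x)).re + (trace (ER x * ER x)).re) :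
    ES.comp ET = ER := by
  have hR_mem_S : ∀ a, ER a ∈ S := fun a => (StarSubalgebra.mem_inf.mp (hER.1 a)).1
  have hR_mem_T : ∀ a, ER a ∈ T := fun a => (StarSubalgebra.mem_inf.mp (hER.1 a)).2
  refine linearMap_ext_of_isHermitian fun a ha => ?_
  set v := ET a - ER a
  have hv : v.IsHermitian := (hET.isHermitian_apply ha).sub (hER.isHermitian_apply ha)
  have htv : trace v = 0 := by rw [trace_sub, hET.trace_apply, hER.trace_apply, sub_self]
  have hETv : ET v = v := hET.2.1 _ (sub_mem (hET.1 a) (hR_mem_T a))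
  have hERv : ER v = 0 := by
    rw [map_sub, hET.apply_apply_of_le hER inf_le_right, hER.2.1 _ (hER.1 a), sub_self]
  have hESv : ES v = 0 := by
    refine (hES.isHermitian_apply hv).eq_zero_of_re_trace_mul_self_nonpos ?_
    simpa [hETv, hERv] using hquad v hv htv
  rwa [map_sub, hES.2.1 _ (hR_mem_S a), sub_eq_zero] at hESv

noncomputable def maxMixedPerturb (y : Matrix ι ι ℂ) (ε : ℝ) : Matrix ι ι ℂ :=
  (Fintype.card ι : ℂ)⁻¹ • (1 + (ε : ℂ) • y)

lemma IsCondExp.map_maxMixedPerturb {N : StarSubalgebra ℂ (Matrix ι ι ℂ)}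
    {E : Matrix ι ι ℂ →ₗ[ℂ] Matrix ι ι ℂ} (hE : IsCondExp N E) (y : Matrix ι ι ℂ) (ε : ℝ) :
    E (maxMixedPerturb y ε) = maxMixedPerturb (E y) ε := by
  rw [maxMixedPerturb, maxMixedPerturb, map_smul, map_add, map_smul, hE.map_one]

section maxMixedPerturb

variable {y : Matrix ι ι ℂ}

lemma isHermitian_maxMixedPerturb (hy : y.IsHermitian) (ε : ℝ) :
    (maxMixedPerturb y ε).IsHermitian :=
  (isHermitian_one.add (hy.smul (Complex.conj_ofReal ε))).smul (by simp [IsSelfAdjoint])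

variable [Nonempty ι]

lemma trace_maxMixedPerturb (hty : trace y = 0) (ε : ℝ) : trace (maxMixedPerturb y ε) = 1 := by
  simp [maxMixedPerturb, hty, Fintype.card_ne_zero]

lemma trace_maxMixedPerturb_mul_self (hty : trace y = 0) (ε : ℝ) :
    (Fintype.card ι : ℂ) ^ 2 * trace (maxMixedPerturb y ε * maxMixedPerturb y ε) =
      Fintype.card ι + (ε : ℂ) ^ 2 * trace (y * y) := by
  have hN : (Fintype.card ι : ℂ) ≠ 0 := Nat.cast_ne_zero.mpr Fintype.card_ne_zero
  simp only [maxMixedPerturb, smul_mul_smul_comm, add_mul, mul_add, one_mul, mul_one,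
    smul_mul_smul_comm, trace_smul, trace_add, trace_one, hty, smul_eq_mul]
  field_simp
  ring

lemma sum_eigenvalues_maxMixedPerturb (hy : y.IsHermitian) (hty : trace y = 0) (ε : ℝ) :
    ∑ i, (isHermitian_maxMixedPerturb hy ε).eigenvalues i = 1 := by
  have h := congrArg Complex.re
    ((isHermitian_maxMixedPerturb hy ε).trace_eq_sum_eigenvalues ▸ trace_maxMixedPerturb hty ε)
  simpa using h

-- Only `tr ρ` and `tr ρ²` enter, so the eigenvalues of `ρ` never have to be matched with those
-- of `y`.
lemma sum_card_mul_eigenvalues_sub_one_sq (hy : y.IsHermitian) (hty : trace y = 0) (ε : ℝ) :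
    ∑ i, (Fintype.card ι * (isHermitian_maxMixedPerturb hy ε).eigenvalues i - 1) ^ 2 =
      ε ^ 2 * (trace (y * y)).re := by
  set hρ := isHermitian_maxMixedPerturb hy ε
  set N : ℝ := (Fintype.card ι : ℝ)
  have hsum := sum_eigenvalues_maxMixedPerturb hy hty ε
  have hsum_sq : N ^ 2 * ∑ i, hρ.eigenvalues i ^ 2 = N + ε ^ 2 * (trace (y * y)).re := by
    have h := congrArg Complex.re (hρ.trace_mul_self ▸ trace_maxMixedPerturb_mul_self hty ε)
    rw [← Complex.ofReal_natCast, ← Complex.ofReal_pow, ← Complex.ofReal_pow] at h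
    simpa [← Complex.ofReal_pow, Complex.re_ofReal_mul] using h
  have hexpand : ∀ i, (N * hρ.eigenvalues i - 1) ^ 2 =
      N ^ 2 * hρ.eigenvalues i ^ 2 - 2 * N * hρ.eigenvalues i + 1 := fun i => by ring
  simp only [hexpand, Finset.sum_add_distrib, Finset.sum_sub_distrib, ← Finset.mul_sum, hsum,
    hsum_sq, Finset.sum_const, Finset.card_univ, nsmul_eq_mul, mul_one]
  ring

lemma abs_card_mul_eigenvalues_sub_one_le (hy : y.IsHermitian) (hty : trace y = 0) {ε : ℝ}
    (hε : 0 ≤ ε) (i : ι) :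
    |Fintype.card ι * (isHermitian_maxMixedPerturb hy ε).eigenvalues i - 1| ≤
      ε * √(trace (y * y)).re := by
  set u := fun j => (Fintype.card ι : ℝ) * (isHermitian_maxMixedPerturb hy ε).eigenvalues j - 1
  have hu : u i ^ 2 ≤ ∑ j, u j ^ 2 :=
    Finset.single_le_sum (f := fun j => u j ^ 2) (fun j _ => sq_nonneg (u j)) (Finset.mem_univ i)
  rw [sum_card_mul_eigenvalues_sub_one_sq hy hty] at hu
  calc |u i| ≤ √(ε ^ 2 * (trace (y * y)).re) := Real.abs_le_sqrt hu
    _ = ε * √(trace (y * y)).re := by rw [Real.sqrt_mul (sq_nonneg ε), Real.sqrt_sq hε]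

lemma isDensity_maxMixedPerturb (hy : y.IsHermitian) (hty : trace y = 0) {ε : ℝ} (hε : 0 ≤ ε)
    (hsmall : ε * √(trace (y * y)).re ≤ 1) : IsDensity (maxMixedPerturb y ε) := by
  refine ⟨(isHermitian_maxMixedPerturb hy ε).posSemidef_iff_eigenvalues_nonneg.mpr fun i => ?_,
    trace_maxMixedPerturb hty ε⟩
  rw [Pi.zero_apply]
  have h := (abs_le.mp ((abs_card_mul_eigenvalues_sub_one_le hy hty hε i).trans hsmall)).1
  have hN : (0 : ℝ) < Fintype.card ι := Nat.cast_pos.mpr Fintype.card_pos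
  nlinarith

lemma abs_vnEntropy_maxMixedPerturb_sub_le (hy : y.IsHermitian) (hty : trace y = 0) {ε : ℝ}
    (hε : 0 ≤ ε) (hsmall : ε * √(trace (y * y)).re ≤ 1 / 2) :
    |vnEntropy (maxMixedPerturb y ε) -
        (Real.log (Fintype.card ι) - ε ^ 2 * (trace (y * y)).re / (2 * Fintype.card ι))| ≤
      4 * (trace (y * y)).re * √(trace (y * y)).re / Fintype.card ι * ε ^ 3 := by
  set hρ := isHermitian_maxMixedPerturb hy ε
  set N : ℝ := (Fintype.card ι : ℝ)
  set τ := (trace (y * y)).re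
  have hsum := sum_card_mul_eigenvalues_sub_one_sq hy hty ε
  have hbd := abs_card_mul_eigenvalues_sub_one_le hy hty hε
  have hcube : ∑ i, |N * hρ.eigenvalues i - 1| ^ 3 ≤ ε * √τ * (ε ^ 2 * τ) := by
    rw [← hsum, Finset.mul_sum]
    refine Finset.sum_le_sum fun i _ => ?_
    rw [pow_succ', ← sq_abs (N * hρ.eigenvalues i - 1)]
    exact mul_le_mul_of_nonneg_right (hbd i) (sq_nonneg _)
  have h := abs_neg_sum_mul_log_sub_le hρ.eigenvalues (sum_eigenvalues_maxMixedPerturb hy hty ε)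
    fun i => (hbd i).trans hsmall
  rw [hsum] at h
  rw [hρ.vnEntropy_eq]
  calc _ ≤ 4 / N * ∑ i, |N * hρ.eigenvalues i - 1| ^ 3 := h
    _ ≤ 4 / N * (ε * √τ * (ε ^ 2 * τ)) := by gcongr
    _ = _ := by ring

lemma eventually_isDensity_maxMixedPerturb (hy : y.IsHermitian) (hty : trace y = 0) :
    ∀ᶠ ε in 𝓝[>] 0, IsDensity (maxMixedPerturb y ε) := by
  filter_upwards [eventually_nonneg_and_mul_le (√(trace (y * y)).re) one_pos] with ε hε
  exact isDensity_maxMixedPerturb hy hty hε.1 hε.2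

lemma isBigO_vnEntropy_maxMixedPerturb (hy : y.IsHermitian) (hty : trace y = 0) :
    (fun ε => vnEntropy (maxMixedPerturb y ε) -
        (Real.log (Fintype.card ι) - ε ^ 2 * (trace (y * y)).re / (2 * Fintype.card ι)))
      =O[𝓝[>] 0] fun ε => ε ^ 3 := by
  refine IsBigO.of_bound (4 * (trace (y * y)).re * √(trace (y * y)).re / Fintype.card ι) ?_
  filter_upwards [eventually_nonneg_and_mul_le (√(trace (y * y)).re) one_half_pos] with ε hε
  rw [Real.norm_eq_abs, Real.norm_eq_abs, abs_of_nonneg (pow_nonneg hε.1 3)]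
  exact abs_vnEntropy_maxMixedPerturb_sub_le hy hty hε.1 hε.2

end maxMixedPerturb

lemma re_trace_mul_self_add_le_of_entropy_ineq [Nonempty ι]
    {S T R : StarSubalgebra ℂ (Matrix ι ι ℂ)} {ES ET ER : Matrix ι ι ℂ →ₗ[ℂ] Matrix ι ι ℂ}
    (hES : IsCondExp S ES) (hET : IsCondExp T ET) (hER : IsCondExp R ER)
    (hineq : ∀ ρ : Matrix ι ι ℂ, IsDensity ρ →
      0 ≤ vnEntropy (ES ρ) + vnEntropy (ET ρ) - vnEntropy ρ - vnEntropy (ER ρ))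
    (x : Matrix ι ι ℂ) (hx : x.IsHermitian) (htx : trace x = 0) :
    (trace (ES x * ES x)).re + (trace (ET x * ET x)).re ≤
      (trace (x * x)).re + (trace (ER x * ER x)).re := by
  set N : ℝ := (Fintype.card ι : ℝ)
  set q := fun y : Matrix ι ι ℂ => (trace (y * y)).re
  set err := fun (y : Matrix ι ι ℂ) (ε : ℝ) =>
    vnEntropy (maxMixedPerturb y ε) - (Real.log N - ε ^ 2 * q y / (2 * N))
  have herr : ∀ {M : StarSubalgebra ℂ (Matrix ι ι ℂ)} {E : Matrix ι ι ℂ →ₗ[ℂ] Matrix ι ι ℂ},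
      IsCondExp M E → err (E x) =O[𝓝[>] 0] fun ε => ε ^ 3 := fun hE =>
    isBigO_vnEntropy_maxMixedPerturb (hE.isHermitian_apply hx) (by rw [hE.trace_apply, htx])
  have hcoeff := nonneg_of_eventually_nonneg_mul_sq_add
    (a := (q x + q (ER x) - q (ES x) - q (ET x)) / (2 * N))
    ((((herr hES).add (herr hET)).sub (isBigO_vnEntropy_maxMixedPerturb hx htx)).sub (herr hER))
    (by
      filter_upwards [eventually_isDensity_maxMixedPerturb hx htx] with ε hρ
      have h := hineq _ hρ
      rw [hES.map_maxMixedPerturb, hET.map_maxMixedPerturb, hER.map_maxMixedPerturb] at h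
      convert h using 1
      simp only [err]
      ring)
  have hN : 0 < 2 * N := by positivity
  linarith [(le_div_iff₀ hN).mp hcoeff]

/-- Converse of algebraic strong subadditivity.  If
`H(S)_ρ + H(T)_ρ − H(M)_ρ − H(S∩T)_ρ ≥ 0` holds for every density `ρ`, then the
conditional expectations satisfy `E_S ∘ E_T = E_T ∘ E_S = E_{S ⊓ T}`, i.e. `S`
and `T` form a commuting square. -/
theorem algebraic_SSA_converse
    (S T : StarSubalgebra ℂ (Matrix ι ι ℂ))
    (ES ET ER : Matrix ι ι ℂ →ₗ[ℂ] Matrix ι ι ℂ)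
    (hES : IsCondExp S ES) (hET : IsCondExp T ET) (hER : IsCondExp (S ⊓ T) ER)
    (hineq : ∀ ρ : Matrix ι ι ℂ, IsDensity ρ →
      0 ≤ vnEntropy (ES ρ) + vnEntropy (ET ρ) - vnEntropy ρ - vnEntropy (ER ρ)) :
    ES.comp ET = ER ∧ ET.comp ES = ER := by
  rcases isEmpty_or_nonempty ι with hι | hι
  · exact ⟨Subsingleton.elim _ _, Subsingleton.elim _ _⟩
  have hquad := re_trace_mul_self_add_le_of_entropy_ineq hES hET hER hineq
  refine ⟨hES.comp_eq_of_re_trace_mul_self_add_le hET hER hquad,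
    hET.comp_eq_of_re_trace_mul_self_add_le hES (by rwa [inf_comm]) fun x hx htx => ?_⟩
  rw [add_comm]
  exact hquad x hx htx
end

section
/- Let S, T ⊆ M be subalgebras forming a commuting square and let σ be a density with E_T(σ) = σ. Then for every density ρ, −D(E_S(ρ)‖E_S(σ)) − D(E_T(ρ)‖E_T(σ)) + D(ρ‖σ) + D(E_{S∩T}(ρ)‖E_{S∩T}(σ)) = H(S)_ρ + H(T)_ρ − H(M)_ρ − H(S∩T)_ρ. -/
open Matrix
open scoped ComplexOrder

variable {ι : Type*} [Fintype ι] [DecidableEq ι]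

/-! Writing `D(ρ‖σ) = -H(ρ) - Re tr(ρ log σ)`, the entropy terms of the four relative entropies
give the right-hand side, and the cross terms cancel in pairs. Indeed `E_S σ = E_{S∩T} σ` lies in
`S ∩ T` and `σ` in `T`; their logarithms are polynomials in them (interpolate `log` at the
eigenvalues), hence lie in the same subalgebras; and `tr(E(ρ) b) = tr(ρ b)` for `b` in the range
of a conditional expectation `E`. So both `tr(E_S ρ · log E_S σ)` and
`tr(E_{S∩T} ρ · log E_{S∩T} σ)` equal `tr(ρ · log E_S σ)`, and `tr(E_T ρ · log E_T σ) = tr(ρ · log σ)`. -/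

open Polynomial in
theorem exists_polynomial_eval_eq_on_finset {K : Type*} [Field K] [DecidableEq K]
    (s : Finset K) (g : K → K) : ∃ p : K[X], ∀ x ∈ s, p.eval x = g x :=
  ⟨Lagrange.interpolate s id g, fun _ hx =>
    Lagrange.eval_interpolate_at_node g (Set.injOn_id _) hx⟩

open Polynomial in
theorem matFun_mem_adjoin (f : ℝ → ℝ) (ρ : Matrix ι ι ℂ) :
    matFun f ρ ∈ Algebra.adjoin ℂ {ρ} := by
  unfold matFun
  split_ifs with h
  · classical
    obtain ⟨p, hp⟩ := exists_polynomial_eval_eq_on_finset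
      (Finset.univ.image fun i => (h.eigenvalues i : ℂ)) fun z => (f z.re : ℂ)
    have hdiag : diagonal (fun i => (f (h.eigenvalues i) : ℂ)) =
        aeval (diagonal (RCLike.ofReal ∘ h.eigenvalues)) p := by
      change _ = aeval (diagonalAlgHom ℂ (RCLike.ofReal ∘ h.eigenvalues)) p
      rw [aeval_algHom_apply, aeval_pi_apply, diagonalAlgHom_apply]
      congr 1
      funext i
      simpa using (hp _ (Finset.mem_image_of_mem _ (Finset.mem_univ i))).symm
    rw [hdiag]
    change Unitary.conjStarAlgAut ℂ _ h.eigenvectorUnitary (aeval _ p) ∈ _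
    rw [← aeval_algHom_apply, ← h.spectral_theorem]
    exact aeval_mem_adjoin_singleton ℂ ρ
  · exact zero_mem _

theorem matFun_mem {A : Subalgebra ℂ (Matrix ι ι ℂ)} (f : ℝ → ℝ) {ρ : Matrix ι ι ℂ}
    (hρ : ρ ∈ A) : matFun f ρ ∈ A :=
  Algebra.adjoin_le (Set.singleton_subset_iff.mpr hρ) (matFun_mem_adjoin f ρ)

theorem IsCondExp.trace_mul_matLog {N : StarSubalgebra ℂ (Matrix ι ι ℂ)}
    {E : Matrix ι ι ℂ →ₗ[ℂ] Matrix ι ι ℂ} (hE : IsCondExp N E) (a : Matrix ι ι ℂ)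
    {x : Matrix ι ι ℂ} (hx : x ∈ N) :
    trace (E a * matLog x) = trace (a * matLog x) :=
  (hE.2.2 a _ (matFun_mem (A := N.toSubalgebra) Real.log hx)).symm

theorem relEntropy_eq_neg_vnEntropy_sub (ρ σ : Matrix ι ι ℂ) :
    relEntropy ρ σ = -vnEntropy ρ - (trace (ρ * matLog σ)).re := by
  rw [relEntropy, vnEntropy, trace_sub, Complex.sub_re, neg_neg]

theorem relEntropy_combination_eq_entropy_expression_general
    (S T : StarSubalgebra ℂ (Matrix ι ι ℂ))
    (ES ET ER : Matrix ι ι ℂ →ₗ[ℂ] Matrix ι ι ℂ)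
    (hES : IsCondExp S ES) (hET : IsCondExp T ET) (hER : IsCondExp (S ⊓ T) ER)
    (hsq1 : ES.comp ET = ER)
    (σ : Matrix ι ι ℂ) (hσT : ET σ = σ)
    (ρ : Matrix ι ι ℂ) :
    - relEntropy (ES ρ) (ES σ) - relEntropy (ET ρ) (ET σ)
        + relEntropy ρ σ + relEntropy (ER ρ) (ER σ)
      = vnEntropy (ES ρ) + vnEntropy (ET ρ) - vnEntropy ρ - vnEntropy (ER ρ) := by
  have hERσ : ER σ = ES σ := by rw [← hsq1, LinearMap.comp_apply, hσT]
  have hESσ_mem : ES σ ∈ S ⊓ T := hERσ ▸ hER.1 σ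
  have hσ_mem : σ ∈ T := hσT ▸ hET.1 σ
  simp only [relEntropy_eq_neg_vnEntropy_sub, hERσ, hσT,
    hES.trace_mul_matLog ρ (StarSubalgebra.mem_inf.mp hESσ_mem).1,
    hER.trace_mul_matLog ρ hESσ_mem, hET.trace_mul_matLog ρ hσ_mem]
  ring

/-- For a commuting square `S, T ⊆ M` and an `E_T`-invariant
density `σ`, the relative-entropy combination collapses to the entropy
expression:
`−D(E_S ρ‖E_S σ) − D(E_T ρ‖E_T σ) + D(ρ‖σ) + D(E_{S∩T} ρ‖E_{S∩T} σ)
  = H(S)_ρ + H(T)_ρ − H(M)_ρ − H(S∩T)_ρ`. -/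
theorem relEntropy_combination_eq_entropy_expression
    (S T : StarSubalgebra ℂ (Matrix ι ι ℂ))
    (ES ET ER : Matrix ι ι ℂ →ₗ[ℂ] Matrix ι ι ℂ)
    (hES : IsCondExp S ES) (hET : IsCondExp T ET) (hER : IsCondExp (S ⊓ T) ER)
    (hsq1 : ES.comp ET = ER) (hsq2 : ET.comp ES = ER)
    (σ : Matrix ι ι ℂ) (hσ : IsDensity σ) (hσT : ET σ = σ)
    (ρ : Matrix ι ι ℂ) (hρ : IsDensity ρ) :
    - relEntropy (ES ρ) (ES σ) - relEntropy (ET ρ) (ET σ)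
        + relEntropy ρ σ + relEntropy (ER ρ) (ER σ)
      = vnEntropy (ES ρ) + vnEntropy (ET ρ) - vnEntropy ρ - vnEntropy (ER ρ) :=
  relEntropy_combination_eq_entropy_expression_general S T ES ET ER hES hET hER hsq1 σ hσT ρ
end
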